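/- arXiv:0710.4023 — 11 statements merged into one kernel-verified Lean document; each statement's English description precedes it below -/
import Mathlib

section
/- For every positive integer n and every real t, the integral from 0 to t of (1-(1-x)^n)/x dx equals the sum over k from 1 to n of binom(n,k)(-1)^{k+1} t^k/k, which also equals the sum over k from 1 to n of (1-(1-t)^k)/k. -/
/-! For `x ≠ 0` the integrand is a polynomial, which can be written in two ways: by the binomial
theorem as `∑_{k<n} C(n, k+1) (-x)^k`, and as the geometric sum `∑_{k<n} (1 - x)^k`. Integrating
either termwise gives the corresponding sum. -/

open MeasureTheory Finset intervalIntegral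

theorem Finset.sum_Icc_one_eq_sum_range {M : Type*} [AddCommMonoid M] (f : ℕ → M) (n : ℕ) :
    ∑ k ∈ Icc 1 n, f k = ∑ k ∈ range n, f (k + 1) := by
  rw [← Ico_add_one_right_eq_Icc, sum_Ico_eq_sum_range, add_tsub_cancel_right]
  simp only [add_comm]

theorem one_sub_one_sub_pow_eq_mul_geom_sum {R : Type*} [Ring R] (x : R) (n : ℕ) :
    1 - (1 - x) ^ n = x * ∑ k ∈ range n, (1 - x) ^ k := by
  rw [← mul_neg_geom_sum, sub_sub_cancel]

theorem one_sub_one_sub_pow_eq_mul_sum_choose {R : Type*} [CommRing R] (x : R) (n : ℕ) :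
    1 - (1 - x) ^ n = x * ∑ k ∈ range n, (n.choose (k + 1) : R) * (-1) ^ k * x ^ k := by
  rw [show (1 : R) - x = -x + 1 by ring, add_pow, sum_range_succ', mul_sum]
  simp only [one_pow, mul_one, pow_zero, Nat.choose_zero_right, Nat.cast_one, neg_pow x]
  rw [sub_add_cancel_right, ← sum_neg_distrib]
  refine sum_congr rfl fun k _ => ?_
  ring

theorem intervalIntegral.integral_div_id_eq_of_eq_mul {f g : ℝ → ℝ} (h : ∀ x, f x = x * g x)
    (a b : ℝ) : ∫ x in a..b, f x / x = ∫ x in a..b, g x := by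
  refine integral_congr_ae ?_
  filter_upwards [Measure.ae_ne volume 0] with x hx _
  rw [h, mul_div_cancel_left₀ _ hx]

theorem integral_one_sub_pow (k : ℕ) (t : ℝ) :
    ∫ x in (0 : ℝ)..t, (1 - x) ^ k = (1 - (1 - t) ^ (k + 1)) / (k + 1) := by
  rw [integral_comp_sub_left (fun x => x ^ k), integral_pow, sub_zero, one_pow]

theorem stmt_0_general (n : ℕ) (t : ℝ) :
    (∫ x in (0:ℝ)..t, (1 - (1 - x) ^ n) / x) =
      ∑ k ∈ Finset.Icc 1 n, (n.choose k : ℝ) * (-1) ^ (k + 1) * t ^ k / k ∧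
    (∫ x in (0:ℝ)..t, (1 - (1 - x) ^ n) / x) =
      ∑ k ∈ Finset.Icc 1 n, (1 - (1 - t) ^ k) / (k : ℝ) := by
  constructor
  · rw [integral_div_id_eq_of_eq_mul (one_sub_one_sub_pow_eq_mul_sum_choose · n),
      integral_finsetSum fun k _ => (by fun_prop : Continuous _).intervalIntegrable 0 t,
      sum_Icc_one_eq_sum_range]
    refine sum_congr rfl fun k _ => ?_
    rw [intervalIntegral.integral_const_mul, integral_pow]
    push_cast
    ring
  · rw [integral_div_id_eq_of_eq_mul (one_sub_one_sub_pow_eq_mul_geom_sum · n),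
      integral_finsetSum fun k _ => (by fun_prop : Continuous _).intervalIntegrable 0 t,
      sum_Icc_one_eq_sum_range]
    refine sum_congr rfl fun k _ => ?_
    rw [integral_one_sub_pow]
    push_cast
    rfl

theorem stmt_0 (n : ℕ) (hn : 0 < n) (t : ℝ) :
    (∫ x in (0:ℝ)..t, (1 - (1 - x) ^ n) / x) =
      ∑ k ∈ Finset.Icc 1 n, (n.choose k : ℝ) * (-1) ^ (k + 1) * t ^ k / k ∧
    (∫ x in (0:ℝ)..t, (1 - (1 - x) ^ n) / x) =
      ∑ k ∈ Finset.Icc 1 n, (1 - (1 - t) ^ k) / (k : ℝ) :=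
  stmt_0_general n t
end

section
/- For every positive integer n, ∑_{k=1}^n binom(n,k) (-1)^{k+1}/k^2 = (1/2)(H_n)^2 + (1/2) H_n^{(2)}, where H_n = ∑_{k=1}^n 1/k and H_n^{(2)} = ∑_{k=1}^n 1/k^2. -/
open Finset

/-!
Write `S_r(n) = ∑_{k=1}^n C(n,k) (-1)^(k+1) / k^r`. Pascal's rule together with
`k C(n+1,k) = (n+1) C(n,k-1)` gives `S_{r+1}(n+1) = S_{r+1}(n) + S_r(n+1) / (n+1)`.
As `S_0(n) = 1` for `n ≥ 1`, this makes `S_1(n) = H_n`, and then `S_2(n) = ∑_{m ≤ n} H_m / m`,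
which satisfies the same recursion as `(H_n^2 + H_n^(2)) / 2`.
-/

theorem sum_Icc_choose_mul_neg_one_pow {R : Type*} [CommRing R] {n : ℕ} (hn : n ≠ 0) :
    ∑ k ∈ Icc 1 n, (n.choose k : R) * (-1) ^ (k + 1) = 1 := by
  have h := congrArg (Int.cast : ℤ → R) (Int.alternating_sum_range_choose_of_ne hn)
  push_cast at h
  rw [range_eq_Ico, sum_eq_sum_Ico_succ_bot (by omega), Ico_add_one_right_eq_Icc] at h
  rw [pow_zero, Nat.choose_zero_right, Nat.cast_one, one_mul] at h
  calc ∑ k ∈ Icc 1 n, (n.choose k : R) * (-1) ^ (k + 1)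
      = -∑ k ∈ Icc 1 n, (-1) ^ k * (n.choose k : R) := by
        rw [← sum_neg_distrib]
        exact sum_congr rfl fun k _ ↦ by ring
    _ = 1 := by linear_combination -h

noncomputable def altChooseSum (r n : ℕ) : ℝ :=
  ∑ k ∈ Icc 1 n, (n.choose k : ℝ) * (-1) ^ (k + 1) / (k : ℝ) ^ r

theorem altChooseSum_zero_right (r : ℕ) : altChooseSum r 0 = 0 := by
  simp [altChooseSum]

theorem altChooseSum_zero_left {n : ℕ} (hn : n ≠ 0) : altChooseSum 0 n = 1 := by
  simpa [altChooseSum] using sum_Icc_choose_mul_neg_one_pow hn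

theorem altChooseSum_succ_succ (r n : ℕ) :
    altChooseSum (r + 1) (n + 1) = altChooseSum (r + 1) n + altChooseSum r (n + 1) / (n + 1) := by
  have hterm : ∀ k ∈ Icc 1 (n + 1), ((n + 1).choose k : ℝ) * (-1) ^ (k + 1) / (k : ℝ) ^ (r + 1) =
      (n.choose k : ℝ) * (-1) ^ (k + 1) / (k : ℝ) ^ (r + 1) +
        ((n + 1).choose k : ℝ) * (-1) ^ (k + 1) / (k : ℝ) ^ r / (n + 1) := by
    intro k hk
    obtain ⟨j, rfl⟩ : ∃ j, k = j + 1 := ⟨k - 1, by grind⟩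
    have hpascal := congrArg (Nat.cast : ℕ → ℝ) (Nat.choose_succ_succ' n j)
    have habsorb := congrArg (Nat.cast : ℕ → ℝ) (Nat.add_one_mul_choose_eq n j)
    push_cast at hpascal habsorb ⊢
    -- so that `field_simp` leaves the sign alone
    generalize (-1 : ℝ) ^ (j + 1 + 1) = sign
    field_simp
    linear_combination sign * ((j : ℝ) + 1) ^ r * ((n + 1) * hpascal + habsorb)
  rw [altChooseSum, sum_congr rfl hterm, sum_add_distrib, sum_Icc_succ_top (by omega),
    Nat.choose_succ_self, ← sum_div]
  simp [altChooseSum]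

theorem altChooseSum_one (n : ℕ) : altChooseSum 1 n = ∑ k ∈ Icc 1 n, (1 : ℝ) / k := by
  induction n with
  | zero => simp [altChooseSum_zero_right]
  | succ n ih =>
    rw [altChooseSum_succ_succ, ih, altChooseSum_zero_left n.succ_ne_zero,
      sum_Icc_succ_top (by omega)]
    push_cast
    ring

theorem stmt_2_general (n : ℕ) :
    ∑ k ∈ Finset.Icc 1 n, (n.choose k : ℝ) * (-1) ^ (k + 1) / (k : ℝ) ^ 2 =
      (1 / 2) * (∑ k ∈ Finset.Icc 1 n, (1 : ℝ) / k) ^ 2 +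
        (1 / 2) * ∑ k ∈ Finset.Icc 1 n, (1 : ℝ) / (k : ℝ) ^ 2 := by
  change altChooseSum 2 n = _
  induction n with
  | zero => simp [altChooseSum_zero_right]
  | succ n ih =>
    rw [altChooseSum_succ_succ, ih, altChooseSum_one, sum_Icc_succ_top (by omega),
      sum_Icc_succ_top (by omega)]
    push_cast
    field_simp
    ring

theorem stmt_2 (n : ℕ) (hn : 0 < n) :
    ∑ k ∈ Finset.Icc 1 n, (n.choose k : ℝ) * (-1) ^ (k + 1) / (k : ℝ) ^ 2 =
      (1 / 2) * (∑ k ∈ Finset.Icc 1 n, (1 : ℝ) / k) ^ 2 +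
        (1 / 2) * ∑ k ∈ Finset.Icc 1 n, (1 : ℝ) / (k : ℝ) ^ 2 :=
  stmt_2_general n
end

section
/- For every positive integer n, ∑_{k=1}^n binom(n,k)(-1)^{k+1}/k^3 = ∑_{k=1}^n (1/k) ∑_{l=1}^k (1/l) ∑_{m=1}^l (1/m). -/
/-!
Write `D s n = ∑_{k=1}^n C(n,k) (-1)^(k+1) / k^s`. From `C(n+1,k) (n+1-k) = C(n,k) (n+1)` one gets
`D (s+1) (n+1) = D (s+1) n + D s (n+1) / (n+1)`, which is exactly the recurrence of the nested
harmonic sums. Since `D 0 n = 1` for `n ≥ 1` (the alternating binomial sum vanishes), induction on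
`s` and `n` gives `D s n = ∑_{n ≥ k₁ ≥ ⋯ ≥ k_s ≥ 1} 1 / (k₁ ⋯ k_s)` for every `s ≥ 1`.
-/

open Finset

noncomputable def nestedHarmonic : ℕ → ℕ → ℝ
  | 0, _ => 1
  | s + 1, n => ∑ k ∈ Icc 1 n, (1 / (k : ℝ)) * nestedHarmonic s k

theorem nestedHarmonic_succ_succ (s n : ℕ) :
    nestedHarmonic (s + 1) (n + 1) =
      nestedHarmonic (s + 1) n + nestedHarmonic s (n + 1) / (n + 1) := by
  rw [nestedHarmonic, nestedHarmonic, sum_Icc_succ_top (by omega)]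
  push_cast
  ring

theorem sum_Icc_choose_mul_neg_one_pow_succ {n : ℕ} (hn : n ≠ 0) :
    ∑ k ∈ Icc 1 n, (n.choose k : ℝ) * (-1) ^ (k + 1) = 1 := by
  have h := congrArg (Int.cast : ℤ → ℝ) (Int.alternating_sum_range_choose_of_ne hn)
  rw [range_eq_Ico, sum_eq_sum_Ico_succ_bot (by omega : 0 < n + 1), zero_add,
    Ico_add_one_right_eq_Icc] at h
  push_cast at h
  calc ∑ k ∈ Icc 1 n, (n.choose k : ℝ) * (-1) ^ (k + 1)
      = -∑ k ∈ Icc 1 n, (-1) ^ k * (n.choose k : ℝ) := by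
        rw [← sum_neg_distrib]
        exact sum_congr rfl fun k _ => by ring
    _ = 1 := by simp only [Nat.choose_zero_right, Nat.cast_one, mul_one] at h; linarith

theorem choose_succ_div_pow_succ (n k s : ℕ) (hk : k ≠ 0) :
    ((n + 1).choose k : ℝ) / (k : ℝ) ^ (s + 1) =
      (n.choose k : ℝ) / (k : ℝ) ^ (s + 1) + ((n + 1).choose k : ℝ) / (k : ℝ) ^ s / (n + 1) := by
  have hk' : (k : ℝ) ≠ 0 := Nat.cast_ne_zero.mpr hk
  rcases le_or_gt k (n + 1) with hkn | hkn
  · have h := congrArg (Nat.cast : ℕ → ℝ) (Nat.choose_mul_succ_eq n k)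
    push_cast [Nat.cast_sub hkn] at h
    rw [pow_succ]
    field_simp
    linear_combination -h
  · simp [Nat.choose_eq_zero_of_lt hkn, Nat.choose_eq_zero_of_lt (n.lt_succ_self.trans hkn)]

theorem sum_choose_div_pow_succ_succ (s n : ℕ) :
    ∑ k ∈ Icc 1 (n + 1), ((n + 1).choose k : ℝ) * (-1) ^ (k + 1) / (k : ℝ) ^ (s + 1) =
      ∑ k ∈ Icc 1 n, (n.choose k : ℝ) * (-1) ^ (k + 1) / (k : ℝ) ^ (s + 1) +
        (∑ k ∈ Icc 1 (n + 1), ((n + 1).choose k : ℝ) * (-1) ^ (k + 1) / (k : ℝ) ^ s) / (n + 1) := by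
  have hsplit : ∀ k ∈ Icc 1 (n + 1),
      ((n + 1).choose k : ℝ) * (-1) ^ (k + 1) / (k : ℝ) ^ (s + 1) =
        (n.choose k : ℝ) * (-1) ^ (k + 1) / (k : ℝ) ^ (s + 1) +
          ((n + 1).choose k : ℝ) * (-1) ^ (k + 1) / (k : ℝ) ^ s / (n + 1) := by
    intro k hk
    rw [mul_div_right_comm, choose_succ_div_pow_succ n k s (by grind),
      mul_div_right_comm _ _ ((k : ℝ) ^ s)]
    ring
  rw [sum_congr rfl hsplit, sum_add_distrib, sum_div, sum_Icc_succ_top (by omega),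
    Nat.choose_succ_self]
  simp

theorem sum_choose_div_pow_succ_eq_nestedHarmonic_of_forall {s : ℕ}
    (h : ∀ n : ℕ, ∑ k ∈ Icc 1 (n + 1), ((n + 1).choose k : ℝ) * (-1) ^ (k + 1) / (k : ℝ) ^ s =
      nestedHarmonic s (n + 1)) (n : ℕ) :
    ∑ k ∈ Icc 1 n, (n.choose k : ℝ) * (-1) ^ (k + 1) / (k : ℝ) ^ (s + 1) =
      nestedHarmonic (s + 1) n := by
  induction n with
  | zero => simp [nestedHarmonic]
  | succ n ih => rw [sum_choose_div_pow_succ_succ, ih, h, nestedHarmonic_succ_succ]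

theorem sum_choose_div_pow_succ_eq_nestedHarmonic (s n : ℕ) :
    ∑ k ∈ Icc 1 n, (n.choose k : ℝ) * (-1) ^ (k + 1) / (k : ℝ) ^ (s + 1) =
      nestedHarmonic (s + 1) n := by
  induction s generalizing n with
  | zero =>
    refine sum_choose_div_pow_succ_eq_nestedHarmonic_of_forall (fun n => ?_) n
    simpa [nestedHarmonic] using sum_Icc_choose_mul_neg_one_pow_succ n.succ_ne_zero
  | succ s ihs => exact sum_choose_div_pow_succ_eq_nestedHarmonic_of_forall (fun n => ihs _) n

theorem stmt_4_general (n : ℕ) :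
    ∑ k ∈ Finset.Icc 1 n, (n.choose k : ℝ) * (-1) ^ (k + 1) / (k : ℝ) ^ 3 =
      ∑ k ∈ Finset.Icc 1 n, (1 / (k : ℝ)) *
        ∑ l ∈ Finset.Icc 1 k, (1 / (l : ℝ)) * ∑ m ∈ Finset.Icc 1 l, (1 : ℝ) / m := by
  rw [sum_choose_div_pow_succ_eq_nestedHarmonic 2 n]
  simp [nestedHarmonic]

theorem stmt_4 (n : ℕ) (hn : 0 < n) :
    ∑ k ∈ Finset.Icc 1 n, (n.choose k : ℝ) * (-1) ^ (k + 1) / (k : ℝ) ^ 3 =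
      ∑ k ∈ Finset.Icc 1 n, (1 / (k : ℝ)) *
        ∑ l ∈ Finset.Icc 1 k, (1 / (l : ℝ)) * ∑ m ∈ Finset.Icc 1 l, (1 : ℝ) / m :=
  stmt_4_general n
end

section
/- For every positive integer n, ∑_{k=1}^n binom(n,k)(-1)^{k+1} H_k / k = H_n^{(2)}, where H_k is the k-th harmonic number and H_n^{(2)} = ∑_{k=1}^n 1/k^2. -/
open Finset

/-!
Write `A n f = ∑ k ≤ n, (-1)^k C(n,k) f k`. Pascal's rule gives
`A (n+1) f = A n f - A n (f ∘ succ)`, and the absorption identity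
`C(n,k)/(k+1) = C(n+1,k+1)/(n+1)` expresses `A n (k ↦ f (k+1)/(k+1))` through `A (n+1) f`.
Together they give `A n (k ↦ 1/(k+1)) = 1/(n+1)`, then `A (n+1) H = -1/(n+1)`, and finally that
`-A n (k ↦ H_k/k)`, the left-hand side, grows by `1/(n+1)^2` from `n` to `n+1`.
-/

def altBinomSum {R : Type*} [CommRing R] (n : ℕ) (f : ℕ → R) : R :=
  ∑ k ∈ range (n + 1), (-1) ^ k * n.choose k * f k

section CommRing

variable {R : Type*} [CommRing R]

theorem altBinomSum_sub (n : ℕ) (f g : ℕ → R) :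
    altBinomSum n f - altBinomSum n g = altBinomSum n (fun k ↦ f k - g k) := by
  simp only [altBinomSum, ← sum_sub_distrib, mul_sub]

theorem altBinomSum_eq_add_sum_range_succ (n : ℕ) (f : ℕ → R) :
    altBinomSum n f =
      f 0 + ∑ k ∈ range (n + 1), (-1) ^ (k + 1) * n.choose (k + 1) * f (k + 1) := by
  rw [altBinomSum, sum_range_succ', sum_range_succ _ n, Nat.choose_succ_self]
  simp only [Nat.cast_zero, mul_zero, zero_mul, add_zero, pow_zero, Nat.choose_zero_right,
    Nat.cast_one, one_mul]
  exact add_comm _ _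

theorem altBinomSum_succ (n : ℕ) (f : ℕ → R) :
    altBinomSum (n + 1) f = altBinomSum n f - altBinomSum n (fun k ↦ f (k + 1)) := by
  rw [altBinomSum_eq_add_sum_range_succ n, altBinomSum, sum_range_succ', altBinomSum,
    add_sub_assoc, ← sum_sub_distrib]
  simp only [pow_zero, Nat.choose_zero_right, Nat.cast_one, one_mul, add_comm (f 0)]
  congr 1
  refine sum_congr rfl fun k _ ↦ ?_
  rw [Nat.choose_succ_succ, Nat.cast_add]
  ring

theorem altBinomSum_succ_const (n : ℕ) (c : R) : altBinomSum (n + 1) (fun _ ↦ c) = 0 := by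
  rw [altBinomSum_succ, sub_self]

end CommRing

section Field

variable {K : Type*} [Field K] [CharZero K]

theorem altBinomSum_div_succ (n : ℕ) (f : ℕ → K) :
    altBinomSum n (fun k ↦ f (k + 1) / (k + 1)) =
      (f 0 - altBinomSum (n + 1) f) / (n + 1) := by
  rw [eq_div_iff (Nat.cast_add_one_ne_zero n), altBinomSum, altBinomSum, sum_range_succ' _ (n + 1),
    sum_mul]
  simp only [pow_zero, Nat.choose_zero_right, Nat.cast_one, one_mul, sub_add_cancel_right,
    ← sum_neg_distrib]
  refine sum_congr rfl fun k _ ↦ ?_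
  have absorb : (n.choose k : K) * (n + 1) = (n + 1).choose (k + 1) * (k + 1) := by
    rw [mul_comm]
    exact_mod_cast Nat.add_one_mul_choose_eq n k
  field_simp [Nat.cast_add_one_ne_zero k]
  linear_combination (-1) ^ k * f (k + 1) * absorb

theorem altBinomSum_inv_succ (n : ℕ) :
    altBinomSum n (fun k ↦ ((k : K) + 1)⁻¹) = ((n : K) + 1)⁻¹ := by
  simpa [altBinomSum_succ_const] using altBinomSum_div_succ n (fun _ ↦ (1 : K))

theorem altBinomSum_harmonic_succ (n : ℕ) :
    altBinomSum (n + 1) (fun k ↦ (harmonic k : K)) = -((n : K) + 1)⁻¹ := by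
  rw [altBinomSum_succ, ← neg_sub, altBinomSum_sub]
  simp [harmonic_succ, altBinomSum_inv_succ]

theorem altBinomSum_harmonic_div (n : ℕ) :
    altBinomSum n (fun k ↦ (harmonic k : K) / k) = -∑ k ∈ Icc 1 n, 1 / (k : K) ^ 2 := by
  induction n with
  | zero => simp [altBinomSum]
  | succ n ih =>
    have increment : altBinomSum n (fun k ↦ (harmonic (k + 1) : K) / ↑(k + 1)) =
        1 / ((n : K) + 1) ^ 2 := by
      push_cast
      rw [altBinomSum_div_succ n (fun k ↦ (harmonic k : K)), altBinomSum_harmonic_succ,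
        harmonic_zero, Rat.cast_zero, zero_sub, neg_neg]
      field_simp
    rw [altBinomSum_succ, ih, increment, sum_Icc_succ_top (by omega)]
    push_cast
    ring

end Field

theorem stmt_5_general (n : ℕ) :
    ∑ k ∈ Finset.Icc 1 n, (n.choose k : ℝ) * (-1) ^ (k + 1) *
        (∑ j ∈ Finset.Icc 1 k, (1 : ℝ) / j) / k =
      ∑ k ∈ Finset.Icc 1 n, (1 : ℝ) / (k : ℝ) ^ 2 := by
  have harmonic_eq (k : ℕ) : ∑ j ∈ Icc 1 k, (1 : ℝ) / j = harmonic k := by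
    simp [harmonic_eq_sum_Icc]
  simp only [harmonic_eq]
  calc _ = -altBinomSum n (fun k ↦ (harmonic k : ℝ) / k) := by
        rw [altBinomSum, range_eq_Ico, sum_eq_sum_Ico_succ_bot (by omega : 0 < n + 1),
          zero_add, Ico_add_one_right_eq_Icc, Nat.cast_zero, div_zero, mul_zero, zero_add,
          ← sum_neg_distrib]
        exact sum_congr rfl fun k _ ↦ by ring
    _ = _ := by rw [altBinomSum_harmonic_div, neg_neg]

theorem stmt_5 (n : ℕ) (hn : 0 < n) :
    ∑ k ∈ Finset.Icc 1 n, (n.choose k : ℝ) * (-1) ^ (k + 1) *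
        (∑ j ∈ Finset.Icc 1 k, (1 : ℝ) / j) / k =
      ∑ k ∈ Finset.Icc 1 n, (1 : ℝ) / (k : ℝ) ^ 2 :=
  stmt_5_general n
end

section
/- Let (a_k) and (b_k) be sequences in a field with b_n = ∑_{k=1}^n binom(n,k) a_k for all n ≥ 1. Then for all n ≥ 1, ∑_{k=1}^n b_k/k = ∑_{k=1}^n binom(n,k) a_k/k. -/
/-!
Write `S n = ∑_{k=1}^n C(n,k) a_k / k`. Since `C(n+1,k) - C(n,k) = C(n,k-1)` and
`C(n,k-1) / k = C(n+1,k) / (n+1)`, the increment `S (n+1) - S n` equals `b_{n+1} / (n+1)`,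
and the claim follows by summing these increments from `S 0 = 0`.
-/

open Finset

section

variable {F : Type*} [Field F] [CharZero F]

theorem Nat.cast_choose_succ_succ_div (n m : ℕ) :
    ((n + 1).choose (m + 1) : F) / (m + 1) =
      (n.choose (m + 1) : F) / (m + 1) + ((n + 1).choose (m + 1) : F) / (n + 1) := by
  have hpascal : ((n + 1).choose (m + 1) : F) = n.choose m + n.choose (m + 1) := by
    exact_mod_cast Nat.choose_succ_succ n m
  have habsorb : ((n : F) + 1) * n.choose m = (n + 1).choose (m + 1) * (m + 1) := by
    exact_mod_cast Nat.add_one_mul_choose_eq n m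
  have hm : (m : F) + 1 ≠ 0 := Nat.cast_add_one_ne_zero m
  have hn : (n : F) + 1 ≠ 0 := Nat.cast_add_one_ne_zero n
  rw [hpascal] at habsorb ⊢
  field_simp
  linear_combination habsorb

theorem sum_Icc_choose_mul_div_succ (a : ℕ → F) (n : ℕ) :
    ∑ k ∈ Icc 1 (n + 1), ((n + 1).choose k : F) * a k / k =
      ∑ k ∈ Icc 1 n, (n.choose k : F) * a k / k +
        (∑ k ∈ Icc 1 (n + 1), ((n + 1).choose k : F) * a k) / (n + 1) := by
  have hsplit : ∀ k ∈ Icc 1 (n + 1), ((n + 1).choose k : F) * a k / k =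
      (n.choose k : F) * a k / k + ((n + 1).choose k : F) * a k / (n + 1) := by
    intro k hk
    obtain ⟨m, rfl⟩ : ∃ m, k = m + 1 := ⟨k - 1, by grind⟩
    push_cast
    rw [mul_div_right_comm, Nat.cast_choose_succ_succ_div]
    ring
  rw [sum_congr rfl hsplit, sum_add_distrib, sum_div,
    sum_Icc_succ_top (by omega : 1 ≤ n + 1), Nat.choose_succ_self]
  simp

end

theorem stmt_7 {F : Type*} [Field F] [CharZero F] (a b : ℕ → F)
    (hab : ∀ n : ℕ, 1 ≤ n → b n = ∑ k ∈ Finset.Icc 1 n, (n.choose k : F) * a k) :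
    ∀ n : ℕ, 1 ≤ n →
      ∑ k ∈ Finset.Icc 1 n, b k / (k : F) =
        ∑ k ∈ Finset.Icc 1 n, (n.choose k : F) * a k / (k : F) := by
  rintro n -
  induction n with
  | zero => simp
  | succ n ih =>
    rw [sum_Icc_succ_top (by omega), ih, sum_Icc_choose_mul_div_succ, hab (n + 1) (by omega)]
    push_cast
    rfl
end

section
/- For every positive integer n and every real x > 0, ∑_{k=1}^n k!/(k·(1+x)(2+x)⋯(k+x)) = 1/x − n!/(x(1+x)⋯(n+x)). -/
/-!
With `P k = (1 + x) ⋯ (k + x)`, the `k`-th summand is `(k-1)! / P k`, and since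
`(k + x) - k = x` it equals `(k-1)! / (x P (k-1)) - k! / (x P k)`. The sum telescopes from
`0! / (x P 0) = 1 / x`.
-/

open Finset

theorem Finset.sum_Icc_one_eq_sub {M : Type*} [AddCommGroup M] {t f : ℕ → M}
    {n : ℕ} (h : ∀ m < n, t (m + 1) = f m - f (m + 1)) :
    ∑ k ∈ Icc 1 n, t k = f 0 - f n := by
  induction n with
  | zero => simp
  | succ n ih =>
    rw [sum_Icc_succ_top (by omega), ih fun m hm => h m (by omega), h n n.lt_succ_self]
    abel

section

variable {K : Type*} [Field K] [CharZero K] (x : K)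

theorem factorial_div_mul_prod_Icc_add_eq_sub {m : ℕ} (hx : x ≠ 0)
    (hP : ∏ j ∈ Icc 1 (m + 1), ((j : K) + x) ≠ 0) :
    ((m + 1).factorial : K) / ((m + 1 : ℕ) * ∏ j ∈ Icc 1 (m + 1), ((j : K) + x)) =
      (m.factorial : K) / (x * ∏ j ∈ Icc 1 m, ((j : K) + x)) -
        ((m + 1).factorial : K) / (x * ∏ j ∈ Icc 1 (m + 1), ((j : K) + x)) := by
  rw [prod_Icc_succ_top (by omega)] at hP ⊢
  obtain ⟨hPm, hlast⟩ := mul_ne_zero_iff.mp hP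
  have hm : ((m + 1 : ℕ) : K) ≠ 0 := Nat.cast_ne_zero.mpr m.succ_ne_zero
  rw [Nat.factorial_succ, Nat.cast_mul]
  field_simp
  push_cast
  ring

theorem sum_factorial_div_mul_prod_Icc_add {n : ℕ} (hx : x ≠ 0)
    (hP : ∀ j ∈ Icc 1 n, (j : K) + x ≠ 0) :
    ∑ k ∈ Icc 1 n, (k.factorial : K) / ((k : K) * ∏ j ∈ Icc 1 k, ((j : K) + x)) =
      1 / x - (n.factorial : K) / (x * ∏ j ∈ Icc 1 n, ((j : K) + x)) := by
  have hf0 : ((0 : ℕ).factorial : K) / (x * ∏ j ∈ Icc (1 : ℕ) 0, ((j : K) + x)) = 1 / x := by simp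
  rw [← hf0]
  refine sum_Icc_one_eq_sub (f := fun m => (m.factorial : K) / (x * ∏ j ∈ Icc 1 m, ((j : K) + x)))
    fun m hm => factorial_div_mul_prod_Icc_add_eq_sub x hx ?_
  exact prod_ne_zero_iff.mpr fun j hj => hP j (by simp only [mem_Icc] at hj ⊢; omega)

end

theorem stmt_9_general (n : ℕ) (x : ℝ) (hx : 0 < x) :
    ∑ k ∈ Finset.Icc 1 n, (k.factorial : ℝ) /
        ((k : ℝ) * ∏ j ∈ Finset.Icc 1 k, ((j : ℝ) + x)) =
      1 / x - (n.factorial : ℝ) / (x * ∏ j ∈ Finset.Icc 1 n, ((j : ℝ) + x)) :=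
  sum_factorial_div_mul_prod_Icc_add x hx.ne' fun _ _ => by positivity

theorem stmt_9 (n : ℕ) (hn : 0 < n) (x : ℝ) (hx : 0 < x) :
    ∑ k ∈ Finset.Icc 1 n, (k.factorial : ℝ) /
        ((k : ℝ) * ∏ j ∈ Finset.Icc 1 k, ((j : ℝ) + x)) =
      1 / x - (n.factorial : ℝ) / (x * ∏ j ∈ Finset.Icc 1 n, ((j : ℝ) + x)) :=
  stmt_9_general n x hx
end

section
/- The series ∑_{n=1}^∞ H_n/(n·2^n) converges and equals π²/12, where H_n is the n-th harmonic number. -/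
/-!
Since `H (n + 1) = H n + 1 / (n + 1)`, the series splits as
`∑ H n x^(n+1) / (n+1) + ∑ x^(n+1) / (n+1)^2` at `x = 1/2`. The first sum is half the Cauchy
square of `∑ x^(n+1) / (n+1) = -log (1 - x)`, i.e. `(log 2)^2 / 2`, because
`∑_{k ≤ n} 1 / ((k+1)(n-k+1)) = 2 H (n+1) / (n+2)`. The second is `Li₂ (1/2)`, which Euler's
reflection formula `Li₂ x + Li₂ (1 - x) + log x log (1 - x) = π^2/6` evaluates to
`π^2/12 - (log 2)^2/2`; the reflection formula holds because its left side has derivative zero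
on `(0, 1)` and tends to `Li₂ 1 = ζ 2` as `x → 0⁺`.
-/

open Finset Real Filter Topology

/-- The dilogarithm `Li₂` on `[-1, 1]`; outside it the series diverges and `tsum` gives `0`. -/
noncomputable def dilog (x : ℝ) : ℝ := ∑' n : ℕ, x ^ (n + 1) / ((n : ℝ) + 1) ^ 2

lemma summable_one_div_nat_add_one_sq : Summable fun n : ℕ => 1 / ((n : ℝ) + 1) ^ 2 := by
  simpa using (summable_nat_add_iff 1).mpr (summable_one_div_nat_pow.mpr one_lt_two)

lemma norm_pow_succ_div_sq_le {x : ℝ} (hx : |x| ≤ 1) (n : ℕ) :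
    ‖x ^ (n + 1) / ((n : ℝ) + 1) ^ 2‖ ≤ 1 / ((n : ℝ) + 1) ^ 2 := by
  rw [norm_div, Real.norm_of_nonneg (by positivity : (0 : ℝ) ≤ ((n : ℝ) + 1) ^ 2), norm_pow,
    Real.norm_eq_abs]
  gcongr
  exact pow_le_one₀ (abs_nonneg x) hx

lemma hasSum_dilog {x : ℝ} (hx : |x| ≤ 1) :
    HasSum (fun n : ℕ => x ^ (n + 1) / ((n : ℝ) + 1) ^ 2) (dilog x) :=
  (summable_one_div_nat_add_one_sq.of_norm_bounded (norm_pow_succ_div_sq_le hx)).hasSum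

lemma continuousOn_dilog : ContinuousOn dilog (Set.Icc (-1) 1) :=
  continuousOn_tsum (fun _ => (continuousOn_pow _).div_const _) summable_one_div_nat_add_one_sq
    fun n _ hx => norm_pow_succ_div_sq_le (abs_le.mpr hx) n

lemma dilog_zero : dilog 0 = 0 := by simp [dilog]

lemma dilog_one : dilog 1 = π ^ 2 / 6 := by
  refine (hasSum_dilog (by simp)).unique ?_
  simpa using (hasSum_nat_add_iff' 1).mpr hasSum_zeta_two

lemma hasSum_pow_div_add_one_of_abs_lt_one {x : ℝ} (hx₀ : x ≠ 0) (hx : |x| < 1) :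
    HasSum (fun n : ℕ => x ^ n / ((n : ℝ) + 1)) (-log (1 - x) / x) := by
  refine ((hasSum_pow_div_log_of_abs_lt_one hx).div_const x).congr_fun fun n => ?_
  rw [pow_succ]
  field_simp

lemma hasDerivAt_dilog {x : ℝ} (hx₀ : x ≠ 0) (hx : |x| < 1) :
    HasDerivAt dilog (-log (1 - x) / x) x := by
  obtain ⟨r, hxr, hr1⟩ := exists_between hx
  have hr0 : 0 < r := (abs_nonneg x).trans_lt hxr
  rw [← (hasSum_pow_div_add_one_of_abs_lt_one hx₀ hx).tsum_eq]
  refine hasDerivAt_tsum_of_isPreconnected (u := fun n : ℕ => r ^ n) (y₀ := 0)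
    (g := fun n y => y ^ (n + 1) / ((n : ℝ) + 1) ^ 2) (g' := fun n y => y ^ n / ((n : ℝ) + 1))
    (summable_geometric_of_lt_one hr0.le hr1) isOpen_Ioo isPreconnected_Ioo
    (fun n y _ => ?_) (fun n y hy => ?_) ⟨by linarith, hr0⟩ ?_ (abs_lt.mp hxr)
  · refine ((hasDerivAt_pow (n + 1) y).div_const (((n : ℝ) + 1) ^ 2)).congr_deriv ?_
    push_cast
    field_simp
  · rw [norm_div, norm_pow, Real.norm_eq_abs, Real.norm_eq_abs]
    calc |y| ^ n / |(n : ℝ) + 1| ≤ |y| ^ n :=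
          div_le_self (by positivity) (by rw [abs_of_nonneg (by positivity)]; simp)
      _ ≤ r ^ n := pow_le_pow_left₀ (abs_nonneg y) (abs_le.mpr ⟨hy.1.le, hy.2.le⟩) n
  · simp

lemma tendsto_log_mul_log_one_sub_nhdsGT_zero :
    Tendsto (fun x => log x * log (1 - x)) (𝓝[>] 0) (𝓝 0) := by
  have hslope : Tendsto (fun x => x⁻¹ * log (1 - x)) (𝓝[>] 0) (𝓝 (-1)) := by
    have h := ((hasDerivAt_id (0 : ℝ)).const_sub 1).log (by norm_num)
    simpa using h.tendsto_slope_zero_right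
  have hxlog : Tendsto (fun x => log x * x) (𝓝[>] 0) (𝓝 0) := by
    simpa using tendsto_log_mul_rpow_nhdsGT_zero one_pos
  have h := hxlog.mul hslope
  rw [zero_mul] at h
  refine h.congr' ?_
  filter_upwards [self_mem_nhdsWithin] with x (hx : 0 < x)
  field_simp

lemma hasDerivAt_dilog_add_dilog_one_sub {x : ℝ} (hx : x ∈ Set.Ioo 0 1) :
    HasDerivAt (fun y => dilog y + dilog (1 - y) + log y * log (1 - y)) 0 x := by
  obtain ⟨hx₀, hx₁⟩ := hx
  have h1x : 0 < 1 - x := by linarith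
  have hsub : HasDerivAt (fun y : ℝ => 1 - y) (-1) x := by
    simpa using (hasDerivAt_id x).const_sub 1
  have hdilog := hasDerivAt_dilog hx₀.ne' (by rw [abs_of_pos hx₀]; exact hx₁)
  have hdilog_sub := (hasDerivAt_dilog h1x.ne' (by rw [abs_of_pos h1x]; linarith)).comp x hsub
  have hlog := (hasDerivAt_log hx₀.ne').mul (hsub.log h1x.ne')
  refine ((hdilog.add hdilog_sub).add hlog).congr_deriv ?_
  simp only [sub_sub_cancel]
  field_simp
  ring

lemma dilog_add_dilog_one_sub {x : ℝ} (hx : x ∈ Set.Ioo 0 1) :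
    dilog x + dilog (1 - x) + log x * log (1 - x) = π ^ 2 / 6 := by
  set G := fun y => dilog y + dilog (1 - y) + log y * log (1 - y)
  have hderiv : ∀ y ∈ Set.Ioo (0 : ℝ) 1, HasDerivAt G 0 y := fun y hy =>
    hasDerivAt_dilog_add_dilog_one_sub hy
  obtain ⟨c, hc⟩ := isOpen_Ioo.exists_is_const_of_deriv_eq_zero isPreconnected_Ioo
    (fun y hy => (hderiv y hy).differentiableAt.differentiableWithinAt)
    (fun y hy => (hderiv y hy).deriv)
  have hIoo : 𝓝[Set.Ioo 0 1] (0 : ℝ) = 𝓝[>] 0 := nhdsWithin_Ioo_eq_nhdsGT one_pos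
  have hdilog : ContinuousOn (fun y => dilog y + dilog (1 - y)) (Set.Icc 0 1) :=
    (continuousOn_dilog.mono (Set.Icc_subset_Icc (by norm_num) le_rfl)).add
      (continuousOn_dilog.comp (continuous_const.sub continuous_id).continuousOn
        fun y hy => ⟨by linarith [hy.2], by linarith [hy.1]⟩)
  have hlim : Tendsto G (𝓝[>] 0) (𝓝 (π ^ 2 / 6)) := by
    have h := (hdilog.continuousWithinAt (Set.left_mem_Icc.2 zero_le_one)).mono
      Set.Ioo_subset_Icc_self
    rw [ContinuousWithinAt, hIoo, sub_zero, dilog_zero, dilog_one, zero_add] at h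
    simpa using h.add tendsto_log_mul_log_one_sub_nhdsGT_zero
  have hconst : Tendsto G (𝓝[>] 0) (𝓝 c) := by
    rw [← hIoo]
    exact tendsto_const_nhds.congr' (eventually_nhdsWithin_of_forall fun y hy => (hc y hy).symm)
  rw [← tendsto_nhds_unique hconst hlim]
  exact hc x hx

lemma dilog_one_half : dilog (1 / 2) = π ^ 2 / 12 - log 2 ^ 2 / 2 := by
  have h := dilog_add_dilog_one_sub (x := 1 / 2) ⟨by norm_num, by norm_num⟩
  rw [show (1 : ℝ) - 1 / 2 = 1 / 2 by norm_num, one_div, log_inv] at h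
  rw [one_div]
  linarith

lemma sum_range_one_div_succ_mul_succ_sub (n : ℕ) :
    ∑ k ∈ range (n + 1), 1 / (((k : ℝ) + 1) * (((n - k : ℕ) : ℝ) + 1))
      = 2 * harmonic (n + 1) / ((n : ℝ) + 2) := by
  have hH : (harmonic (n + 1) : ℝ) = ∑ k ∈ range (n + 1), 1 / ((k : ℝ) + 1) := by
    simp [harmonic]
  have hH' :
      (harmonic (n + 1) : ℝ) = ∑ k ∈ range (n + 1), 1 / (((n - k : ℕ) : ℝ) + 1) := by
    rw [hH, ← sum_range_reflect]
    rfl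
  have hsplit : ∀ k ∈ range (n + 1), 1 / (((k : ℝ) + 1) * (((n - k : ℕ) : ℝ) + 1))
      = (1 / ((k : ℝ) + 1) + 1 / (((n - k : ℕ) : ℝ) + 1)) / ((n : ℝ) + 2) := by
    intro k hk
    have hkn : k ≤ n := Nat.lt_succ_iff.mp (mem_range.mp hk)
    rw [Nat.cast_sub hkn]
    have : (0 : ℝ) < n - k + 1 := by
      have : (k : ℝ) ≤ n := by exact_mod_cast hkn
      linarith
    field_simp
    ring
  rw [sum_congr rfl hsplit, ← sum_div, sum_add_distrib, ← hH, ← hH']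
  ring

lemma hasSum_harmonic_mul_pow_succ_div_succ {x : ℝ} (hx : |x| < 1) :
    HasSum (fun n : ℕ => harmonic n * x ^ (n + 1) / ((n : ℝ) + 1)) (log (1 - x) ^ 2 / 2) := by
  set a := fun n : ℕ => x ^ (n + 1) / ((n : ℝ) + 1) with ha_def
  have ha : HasSum a (-log (1 - x)) := hasSum_pow_div_log_of_abs_lt_one hx
  have ha_norm : Summable fun n => ‖a n‖ := by
    refine (hasSum_pow_div_log_of_abs_lt_one (x := |x|) (by simpa)).summable.congr fun n => ?_
    simp [a, abs_of_nonneg (by positivity : (0 : ℝ) ≤ n + 1)]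
  have hsq := hasSum_sum_range_mul_of_summable_norm ha_norm ha_norm
  rw [ha.tsum_eq, neg_mul_neg, ← sq] at hsq
  have hterm : ∀ n : ℕ, (∑ k ∈ range (n + 1), a k * a (n - k)) / 2
      = harmonic (n + 1) * x ^ (n + 1 + 1) / (((n + 1 : ℕ) : ℝ) + 1) := by
    intro n
    have hpow : ∀ k ∈ range (n + 1), a k * a (n - k)
        = x ^ (n + 2) * (1 / (((k : ℝ) + 1) * (((n - k : ℕ) : ℝ) + 1))) := by
      intro k hk
      have hkn : k ≤ n := Nat.lt_succ_iff.mp (mem_range.mp hk)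
      rw [ha_def, div_mul_div_comm, ← pow_add, show k + 1 + (n - k + 1) = n + 2 by omega,
        mul_one_div]
    rw [sum_congr rfl hpow, ← mul_sum, sum_range_one_div_succ_mul_succ_sub]
    push_cast
    ring
  rw [← hasSum_nat_add_iff' 1, sum_range_one, harmonic_zero]
  simp only [Rat.cast_zero, zero_mul, zero_div, sub_zero]
  exact (hsq.div_const 2).congr_fun fun n => (hterm n).symm

lemma cast_harmonic_eq_sum_Icc_one_div (n : ℕ) :
    (harmonic n : ℝ) = ∑ k ∈ Icc 1 n, (1 : ℝ) / k := by
  simp [harmonic_eq_sum_Icc]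

theorem stmt_10 :
    HasSum (fun n : ℕ =>
        (∑ k ∈ Finset.Icc 1 (n + 1), (1 : ℝ) / k) / ((n + 1 : ℝ) * 2 ^ (n + 1)))
      (π ^ 2 / 12) := by
  have hcauchy := hasSum_harmonic_mul_pow_succ_div_succ (x := 1 / 2) (by norm_num [abs_of_pos])
  have hdilog := hasSum_dilog (x := 1 / 2) (by norm_num [abs_of_pos])
  rw [dilog_one_half] at hdilog
  rw [show (1 : ℝ) - 1 / 2 = 2⁻¹ by norm_num, log_inv, neg_sq] at hcauchy
  convert hcauchy.add hdilog using 1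
  · funext n
    rw [← cast_harmonic_eq_sum_Icc_one_div, harmonic_succ]
    push_cast
    rw [div_pow, one_pow]
    field_simp
  · ring
end

section
/- The series ∑_{n=1}^∞ H_n/n² converges and equals 2ζ(3), where H_n is the n-th harmonic number and ζ is the Riemann zeta function. -/
/-!
Euler's argument. Telescoping gives `H_m / m = ∑_{k ≥ 1} 1 / (k (k + m))`, so
`S = ∑ H_m / m² = ∑_{m, k ≥ 1} 1 / (m k (m + k))`. Splitting
`1 / (m k (m + k)) = 1 / (m (m + k)²) + 1 / (k (m + k)²)` and using the symmetry in `m, k`,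
then summing the first part along the diagonals `m + k = N`, gives
`S = 2 ∑_N H_{N-1} / N² = 2 (S - ζ(3))`. The bound `H_n ≤ 1 + log n` makes `S` finite.
-/

open Finset Filter Topology

theorem hasSum_sub_add_of_antitone {f : ℕ → ℝ} (hf : Antitone f)
    (hf0 : Tendsto f atTop (𝓝 0)) (m : ℕ) :
    HasSum (fun k => f k - f (k + m)) (∑ k ∈ range m, f k) := by
  have hpartial (K : ℕ) : ∑ k ∈ range K, (f k - f (k + m))
      = ∑ k ∈ range m, f k - ∑ k ∈ range m, f (K + k) := by
    have h₁ := sum_range_add f K m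
    have h₂ := sum_range_add f m K
    rw [add_comm m K] at h₂
    simp_rw [sum_sub_distrib, add_comm _ m]
    linarith
  have htail : Tendsto (fun K => ∑ k ∈ range m, f (K + k)) atTop (𝓝 0) := by
    simpa using tendsto_finsetSum (range m) fun k _ => hf0.comp (tendsto_add_atTop_nat k)
  rw [hasSum_iff_tendsto_nat_of_nonneg fun k => sub_nonneg.2 (hf (Nat.le_add_right k m))]
  simpa [hpartial] using tendsto_const_nhds.sub htail

theorem hasSum_one_div_mul_add_two (m : ℕ) :
    HasSum (fun k : ℕ => 1 / (((k : ℝ) + 1) * (k + m + 2)))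
      (harmonic (m + 1) / ((m : ℝ) + 1)) := by
  have hf : Antitone fun k : ℕ => 1 / ((k : ℝ) + 1) := fun i j hij => by
    dsimp only
    gcongr
  have h := (hasSum_sub_add_of_antitone hf tendsto_one_div_add_atTop_nhds_zero_nat
    (m + 1)).div_const ((m : ℝ) + 1)
  have hterm : (fun k : ℕ => (1 / ((k : ℝ) + 1) - 1 / (((k + (m + 1) : ℕ) : ℝ) + 1)) / (m + 1))
      = fun k : ℕ => 1 / (((k : ℝ) + 1) * (k + m + 2)) := by
    ext k
    push_cast
    field_simp
    ring
  rw [hterm] at h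
  rwa [show (harmonic (m + 1) : ℝ) = ∑ k ∈ range (m + 1), 1 / ((k : ℝ) + 1) by simp [harmonic]]

theorem summable_harmonic_div_sq :
    Summable fun n : ℕ => (harmonic (n + 1) : ℝ) / ((n : ℝ) + 1) ^ 2 := by
  have hmaj : Summable fun n : ℕ => 3 * (1 / |(n : ℝ) + 1| ^ (3 / 2 : ℝ)) :=
    ((Real.summable_one_div_nat_add_rpow 1 _).2 (by norm_num)).mul_left 3
  refine hmaj.of_nonneg_of_le (fun n => by have := harmonic_pos n.succ_ne_zero; positivity)
    fun n => ?_
  set x : ℝ := n + 1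
  have hx : 1 ≤ x := by simp [x]
  have hH : (harmonic (n + 1) : ℝ) ≤ 3 * x ^ (1 / 2 : ℝ) := by
    have h₁ := harmonic_le_one_add_log (n + 1)
    have h₂ := Real.log_le_rpow_div (x := x) (by linarith) (ε := 1 / 2) (by norm_num)
    have h₃ : 1 ≤ x ^ (1 / 2 : ℝ) := Real.one_le_rpow hx (by norm_num)
    push_cast at h₁
    linarith
  have hx₀ : 0 < x := by linarith
  rw [abs_of_pos hx₀, div_le_iff₀ (by positivity)]
  calc (harmonic (n + 1) : ℝ) ≤ 3 * x ^ (1 / 2 : ℝ) := hH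
    _ = 3 * (1 / x ^ (3 / 2 : ℝ)) * x ^ 2 := by
      rw [eq_comm, one_div, ← Real.rpow_neg hx₀.le, ← Real.rpow_natCast, mul_assoc,
        ← Real.rpow_add hx₀]
      norm_num

theorem HasSum.sum_antidiagonal {α A : Type*} [AddCommMonoid α] [TopologicalSpace α]
    [ContinuousAdd α] [RegularSpace α] [AddMonoid A] [HasAntidiagonal A] {f : A × A → α} {a : α}
    (h : HasSum f a) : HasSum (fun n => ∑ p ∈ antidiagonal n, f p) a := by
  have h' := (HasAntidiagonal.sigmaAntidiagonalEquivProd.hasSum_iff.2 h).sigma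
    fun n => hasSum_fintype _
  simpa [Function.comp_def, sum_attach] using h'

-- In both kernels the pair `(m, n)` stands for the positive integers `(m + 1, n + 1)`.
noncomputable def eulerKernel (p : ℕ × ℕ) : ℝ :=
  1 / (((p.1 : ℝ) + 1) * (p.2 + 1) * (p.1 + p.2 + 2))

-- In both kernels the pair `(m, n)` stands for the positive integers `(m + 1, n + 1)`.
noncomputable def eulerKernelPart (p : ℕ × ℕ) : ℝ :=
  1 / (((p.1 : ℝ) + 1) * (p.1 + p.2 + 2) ^ 2)

theorem eulerKernel_nonneg (p : ℕ × ℕ) : 0 ≤ eulerKernel p := by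
  unfold eulerKernel; positivity

theorem eulerKernelPart_nonneg (p : ℕ × ℕ) : 0 ≤ eulerKernelPart p := by
  unfold eulerKernelPart; positivity

theorem hasSum_eulerKernel_row (m : ℕ) :
    HasSum (fun n => eulerKernel (m, n)) (harmonic (m + 1) / ((m : ℝ) + 1) ^ 2) := by
  have h := (hasSum_one_div_mul_add_two m).div_const ((m : ℝ) + 1)
  rw [div_div, ← sq] at h
  refine (funext fun n => ?_ : _ = fun n => eulerKernel (m, n)) ▸ h
  unfold eulerKernel
  field_simp
  ring

theorem hasSum_eulerKernel :
    HasSum eulerKernel (∑' m : ℕ, (harmonic (m + 1) : ℝ) / ((m : ℝ) + 1) ^ 2) := by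
  have hsum : Summable eulerKernel :=
    (summable_prod_of_nonneg eulerKernel_nonneg).2
      ⟨fun m => (hasSum_eulerKernel_row m).summable,
        summable_harmonic_div_sq.congr fun m => (hasSum_eulerKernel_row m).tsum_eq.symm⟩
  exact (hsum.hasSum.prod_fiberwise hasSum_eulerKernel_row).unique
    summable_harmonic_div_sq.hasSum ▸ hsum.hasSum

theorem eulerKernel_eq_add_swap (p : ℕ × ℕ) :
    eulerKernel p = eulerKernelPart p + eulerKernelPart p.swap := by
  unfold eulerKernel eulerKernelPart
  rw [Prod.fst_swap, Prod.snd_swap]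
  field_simp
  ring

theorem sum_antidiagonal_eulerKernelPart (n : ℕ) :
    ∑ p ∈ antidiagonal n, eulerKernelPart p = harmonic (n + 1) / ((n : ℝ) + 2) ^ 2 := by
  have h (p) (hp : p ∈ antidiagonal n) :
      eulerKernelPart p = 1 / ((p.1 : ℝ) + 1) / ((n : ℝ) + 2) ^ 2 := by
    rw [HasAntidiagonal.mem_antidiagonal] at hp
    rw [eulerKernelPart, div_div, ← hp]
    push_cast
    ring
  rw [sum_congr rfl h, ← sum_div, Nat.sum_antidiagonal_eq_sum_range_succ_mk]
  simp [harmonic]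

theorem hasSum_harmonic_div_add_two_sq_half :
    HasSum (fun n : ℕ => (harmonic (n + 1) : ℝ) / ((n : ℝ) + 2) ^ 2)
      ((∑' m : ℕ, (harmonic (m + 1) : ℝ) / ((m : ℝ) + 1) ^ 2) / 2) := by
  have hpart : Summable eulerKernelPart :=
    hasSum_eulerKernel.summable.of_nonneg_of_le eulerKernelPart_nonneg fun p : ℕ × ℕ => by
      rw [eulerKernel_eq_add_swap]
      linarith [eulerKernelPart_nonneg p.swap]
  have hsplit : HasSum eulerKernel (∑' p, eulerKernelPart p + ∑' p, eulerKernelPart p) := by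
    rw [funext eulerKernel_eq_add_swap]
    exact hpart.hasSum.add ((Equiv.prodComm ℕ ℕ).hasSum_iff.2 hpart.hasSum)
  have hdiag := hpart.hasSum.sum_antidiagonal
  simp only [sum_antidiagonal_eulerKernelPart] at hdiag
  convert hdiag using 1
  linarith [hasSum_eulerKernel.unique hsplit]

theorem hasSum_harmonic_div_add_two_sq_sub :
    HasSum (fun n : ℕ => (harmonic (n + 1) : ℝ) / ((n : ℝ) + 2) ^ 2)
      (∑' m : ℕ, (harmonic (m + 1) : ℝ) / ((m : ℝ) + 1) ^ 2
        - ∑' m : ℕ, 1 / ((m : ℝ) + 1) ^ 3) := by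
  have hzeta : Summable fun m : ℕ => 1 / ((m : ℝ) + 1) ^ 3 := by
    simpa using (summable_nat_add_iff 1).2 (Real.summable_one_div_nat_pow.2 (by norm_num))
  have hsucc (n : ℕ) : (harmonic (n + 1) : ℝ) / ((n : ℝ) + 2) ^ 2
      = harmonic (n + 1 + 1) / (((n + 1 : ℕ) : ℝ) + 1) ^ 2
        - 1 / (((n + 1 : ℕ) : ℝ) + 1) ^ 3 := by
    rw [harmonic_succ (n + 1)]
    push_cast
    field_simp
    ring
  simp_rw [hsucc]
  simpa using ((hasSum_nat_add_iff' 1).2 summable_harmonic_div_sq.hasSum).sub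
    ((hasSum_nat_add_iff' 1).2 hzeta.hasSum)

theorem stmt_11 :
    HasSum (fun n : ℕ =>
        (∑ k ∈ Finset.Icc 1 (n + 1), (1 : ℝ) / k) / ((n + 1 : ℝ) ^ 2))
      (2 * ∑' n : ℕ, (1 : ℝ) / ((n + 1 : ℝ) ^ 3)) := by
  have hharmonic (n : ℕ) : ∑ k ∈ Icc 1 n, (1 : ℝ) / k = harmonic n := by
    simp [harmonic_eq_sum_Icc]
  simp_rw [hharmonic]
  have hS := hasSum_harmonic_div_add_two_sq_half.unique hasSum_harmonic_div_add_two_sq_sub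
  rw [show 2 * ∑' n : ℕ, 1 / ((n : ℝ) + 1) ^ 3
      = ∑' n : ℕ, (harmonic (n + 1) : ℝ) / ((n : ℝ) + 1) ^ 2 by linarith]
  exact summable_harmonic_div_sq.hasSum
end

section
/- The series ∑_{n=1}^∞ (H_n)²/n² converges and equals 17π⁴/360. -/
/-!
Write `A = ∑ H_n² / n²`, `B = ∑ H_n / n³` and `C = ∑ H₂_n / n²`, where `H₂_n = ∑_{k ≤ n} 1 / k²`.
Symmetrising double series against `ζ(2)² = π⁴ / 36` gives `B = π⁴ / 72` and `C = 7π⁴ / 360`.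
The series `T = ∑_m (H_m / m) (ζ(2) - H₂_m) = ∑_{m < k} H_m / (m k²)` is then evaluated twice.
Summing over `m` first, `∑_{m < k} H_m / m = (H_k² + H₂_k) / 2 - H_k / k` gives
`T = (A + C) / 2 - B`. On the other hand
`∑_{k > m} 1 / ((k - m) k²) = H_m / m² - (ζ(2) - H₂_m) / m`, so the double series
`∑_{m < k} H_m / ((k - m) k²)` is `A - T`, while the convolution identity
`∑_{m < k} H_m / (k - m) = H_k² - H₂_k` shows that it is `A - C`. Hence `T = C` and
`A = C + 2B = 17π⁴ / 360`.

Series over `ℕ` start at the index `0`, where the terms vanish because `1 / 0 = 0`.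
-/

open Finset Real Filter Topology

namespace EulerSum

theorem hasSum_of_hasSum_fiberwise_of_nonneg {β γ : Type*} {f : β × γ → ℝ} {g : β → ℝ} {a : ℝ}
    (hf : 0 ≤ f) (hrow : ∀ b, HasSum (fun c => f (b, c)) (g b)) (hg : HasSum g a) :
    HasSum f a := by
  have hs : Summable f := (summable_prod_of_nonneg hf).mpr
    ⟨fun b => (hrow b).summable, hg.summable.congr fun b => (hrow b).tsum_eq.symm⟩
  rw [← (hs.hasSum.prod_fiberwise hrow).unique hg]
  exact hs.hasSum

theorem hasSum_swap_triangle {f : ℕ → ℕ → ℝ} {b : ℕ → ℝ} {s : ℝ}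
    (hf : ∀ m k, m < k → 0 ≤ f m k) (hcol : HasSum (fun k => ∑ m ∈ range k, f m k) s)
    (hrow : ∀ m, HasSum (fun i => f m (i + (m + 1))) (b m)) : HasSum b s := by
  set F : ℕ × ℕ → ℝ := fun p => if p.2 < p.1 then f p.2 p.1 else 0
  have hF : HasSum F s := by
    refine hasSum_of_hasSum_fiberwise_of_nonneg (fun p => ?_) (fun k => ?_) hcol
    · by_cases h : p.2 < p.1 <;> simp [F, h, hf]
    · have hk := hasSum_sum_of_ne_finset_zero (L := SummationFilter.unconditional ℕ)
        (s := range k) (f := fun m => F (k, m)) (fun m hm => if_neg (by simpa using hm))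
      rwa [sum_congr rfl fun m hm => if_pos (mem_range.mp hm)] at hk
  refine ((Equiv.prodComm ℕ ℕ).hasSum_iff.mpr hF).prod_fiberwise fun m => ?_
  have hzero : ∑ i ∈ range (m + 1), F (i, m) = 0 :=
    sum_eq_zero fun i hi => if_neg (by simp at hi; omega)
  rw [← hasSum_nat_add_iff' (m + 1)]
  simp only [Function.comp_apply, Equiv.prodComm_apply, Prod.swap_prod_mk, hzero, sub_zero]
  exact (hrow m).congr_fun fun i => if_pos (by omega)

theorem hasSum_sub_add_of_antitone {u : ℕ → ℝ} (hu : Antitone u)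
    (hlim : Tendsto u atTop (𝓝 0)) (m : ℕ) :
    HasSum (fun i => u i - u (i + m)) (∑ i ∈ range m, u i) := by
  rw [hasSum_iff_tendsto_nat_of_nonneg fun i => sub_nonneg.mpr (hu (by omega))]
  have hpartial : ∀ N, ∑ i ∈ range N, (u i - u (i + m))
      = ∑ i ∈ range m, u i - ∑ i ∈ range m, u (N + i) := by
    intro N
    have h₁ := sum_range_add u N m
    have h₂ := sum_range_add u m N
    rw [add_comm m N] at h₂
    simp only [sum_sub_distrib, add_comm _ m]
    linarith
  simp only [hpartial]
  simpa using tendsto_const_nhds.sub <| tendsto_finsetSum (range m) fun i _ =>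
    (tendsto_add_atTop_iff_nat i).mpr hlim

noncomputable def H (n : ℕ) : ℝ := ∑ k ∈ Icc 1 n, 1 / (k : ℝ)

noncomputable def H₂ (n : ℕ) : ℝ := ∑ k ∈ Icc 1 n, 1 / (k : ℝ) ^ 2

@[simp] lemma H_zero : H 0 = 0 := by simp [H]

@[simp] lemma H₂_zero : H₂ 0 = 0 := by simp [H₂]

lemma H_succ (n : ℕ) : H (n + 1) = H n + 1 / (n + 1) := by
  rw [H, H, sum_Icc_succ_top (by omega)]
  push_cast
  ring

lemma H₂_succ (n : ℕ) : H₂ (n + 1) = H₂ n + 1 / (n + 1) ^ 2 := by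
  rw [H₂, H₂, sum_Icc_succ_top (by omega)]
  push_cast
  ring

lemma H_nonneg (n : ℕ) : 0 ≤ H n := sum_nonneg fun _ _ => by positivity

lemma H₂_nonneg (n : ℕ) : 0 ≤ H₂ n := sum_nonneg fun _ _ => by positivity

lemma H_eq_sum_range (n : ℕ) : H n = ∑ k ∈ range n, 1 / ((k : ℝ) + 1) := by
  induction n with
  | zero => simp
  | succ n ih => rw [H_succ, sum_range_succ, ih]

lemma H_eq_harmonic (n : ℕ) : H n = harmonic n := by
  induction n with
  | zero => simp
  | succ n ih => rw [H_succ, harmonic_succ, ih]; push_cast; ring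

-- The `k = 0` term is `1 / 0 = 0`, so for `n ≥ 1` this is `H₂ (n - 1)`.
lemma sum_range_inv_sq (n : ℕ) : ∑ k ∈ range n, 1 / (k : ℝ) ^ 2 = H₂ n - 1 / (n : ℝ) ^ 2 := by
  induction n with
  | zero => simp
  | succ n ih => rw [sum_range_succ, ih, H₂_succ]; push_cast; ring

lemma sum_range_inv_sub (n : ℕ) : ∑ m ∈ range n, 1 / ((n : ℝ) - m) = H n := by
  rw [H_eq_sum_range, ← sum_range_reflect]
  refine sum_congr rfl fun m hm => ?_
  rw [show n - 1 - m = n - (m + 1) by omega, Nat.cast_sub (by simp at hm; omega)]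
  push_cast
  ring_nf

lemma sum_range_inv_mul_inv_sub (n : ℕ) :
    ∑ m ∈ range n, 1 / (((m : ℝ) + 1) * (n - m)) = 2 * H n / (n + 1) := by
  have hpf : ∀ m ∈ range n, 1 / (((m : ℝ) + 1) * (n - m))
      = (1 / ((m : ℝ) + 1) + 1 / ((n : ℝ) - m)) / (n + 1) := by
    intro m hm
    have : (m : ℝ) < n := by exact_mod_cast mem_range.mp hm
    have : (n : ℝ) - m ≠ 0 := by linarith
    field_simp
    ring
  rw [sum_congr rfl hpf, ← sum_div, sum_add_distrib, sum_range_inv_sub, ← H_eq_sum_range]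
  ring

lemma sum_range_H_div (n : ℕ) : ∑ m ∈ range n, H m / m = (H n ^ 2 + H₂ n) / 2 - H n / n := by
  induction n with
  | zero => simp
  | succ n ih =>
    rw [sum_range_succ, ih, sub_add_cancel, H_succ, H₂_succ]
    push_cast
    field_simp
    ring

lemma sum_range_H_div_sub (n : ℕ) : ∑ m ∈ range n, H m / ((n : ℝ) - m) = H n ^ 2 - H₂ n := by
  induction n with
  | zero => simp
  | succ n ih =>
    have hshift : ∑ m ∈ range (n + 1), H m / (((n + 1 : ℕ) : ℝ) - m)
        = ∑ m ∈ range n, H m / ((n : ℝ) - m) + ∑ m ∈ range n, 1 / (((m : ℝ) + 1) * (n - m)) := by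
      rw [sum_range_succ', ← sum_add_distrib]
      simp only [H_zero, zero_div, add_zero]
      refine sum_congr rfl fun m _ => ?_
      push_cast
      rw [H_succ, show (n : ℝ) + 1 - (m + 1) = n - m by ring, add_div, div_div]
    rw [hshift, ih, sum_range_inv_mul_inv_sub, H_succ, H₂_succ]
    field_simp
    ring

lemma H₂_le (n : ℕ) : H₂ n ≤ π ^ 2 / 6 := by
  rw [← sub_add_cancel (H₂ n) (1 / (n : ℝ) ^ 2), ← sum_range_inv_sq, ← sum_range_succ]
  exact sum_le_hasSum _ (fun _ _ => by positivity) hasSum_zeta_two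

lemma hasSum_inv_add_sq (m : ℕ) :
    HasSum (fun i : ℕ => 1 / ((i : ℝ) + m + 1) ^ 2) (π ^ 2 / 6 - H₂ m) := by
  have h := (hasSum_nat_add_iff' (m + 1)).mpr hasSum_zeta_two
  rw [sum_range_succ, sum_range_inv_sq, sub_add_cancel] at h
  exact h.congr_fun fun i => by push_cast; ring

lemma hasSum_inv_mul_inv_add {m : ℕ} (hm : m ≠ 0) :
    HasSum (fun i : ℕ => 1 / (((i : ℝ) + 1) * (i + m + 1))) (H m / m) := by
  have hanti : Antitone fun i : ℕ => 1 / ((i : ℝ) + 1) := fun i j hij =>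
    one_div_le_one_div_of_le (by positivity) (by gcongr)
  have h := (hasSum_sub_add_of_antitone hanti tendsto_one_div_add_atTop_nhds_zero_nat m).div_const m
  rw [← H_eq_sum_range] at h
  refine h.congr_fun fun i => ?_
  push_cast
  field_simp
  ring

lemma hasSum_inv_sq_mul_inv_sq :
    HasSum (fun p : ℕ × ℕ => 1 / (p.1 : ℝ) ^ 2 * (1 / (p.2 : ℝ) ^ 2)) ((π ^ 2 / 6) ^ 2) := by
  refine hasSum_of_hasSum_fiberwise_of_nonneg (g := fun m : ℕ => 1 / (m : ℝ) ^ 2 * (π ^ 2 / 6))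
    (fun _ => by positivity) (fun _ => hasSum_zeta_two.mul_left _) ?_
  rw [sq (π ^ 2 / 6)]
  exact hasSum_zeta_two.mul_right _

theorem hasSum_H_div_pow_three : HasSum (fun n : ℕ => H n / n ^ 3) (π ^ 4 / 72) := by
  set f : ℕ × ℕ → ℝ := fun p => 1 / (p.1 : ℝ) ^ 2 * (1 / (p.2 * (p.2 + p.1)))
  have hf : 0 ≤ f := fun _ => by positivity
  have hsymm : ∀ p, f p + f p.swap = 1 / (p.1 : ℝ) ^ 2 * (1 / (p.2 : ℝ) ^ 2) := by
    rintro ⟨m, n⟩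
    rcases eq_or_ne m 0 with rfl | hm
    · simp [f]
    rcases eq_or_ne n 0 with rfl | hn
    · simp [f]
    simp only [f, Prod.swap_prod_mk]
    field_simp
    ring
  have hs : Summable f := hasSum_inv_sq_mul_inv_sq.summable.of_nonneg_of_le hf fun p =>
    hsymm p ▸ le_add_of_nonneg_right (hf p.swap)
  have hrow : ∀ m, HasSum (fun n => f (m, n)) (H m / m ^ 3) := by
    intro m
    rcases eq_or_ne m 0 with rfl | hm
    · simp [f, hasSum_zero]
    rw [← hasSum_nat_add_iff' 1]
    simp only [f, sum_range_one, Nat.cast_zero, zero_mul, div_zero, mul_zero, sub_zero]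
    have h := (hasSum_inv_mul_inv_add hm).mul_left (1 / (m : ℝ) ^ 2)
    rw [show 1 / (m : ℝ) ^ 2 * (H m / m) = H m / m ^ 3 by ring] at h
    refine h.congr_fun fun i => ?_
    push_cast
    ring
  have htwice :
      HasSum (fun p : ℕ × ℕ => 1 / (p.1 : ℝ) ^ 2 * (1 / (p.2 : ℝ) ^ 2)) (2 * ∑' p, f p) := by
    rw [two_mul, ← funext hsymm]
    exact hs.hasSum.add ((Equiv.prodComm ℕ ℕ).hasSum_iff.mpr hs.hasSum)
  have hval : ∑' p, f p = π ^ 4 / 72 := by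
    linear_combination (htwice.unique hasSum_inv_sq_mul_inv_sq) / 2
  exact hval ▸ hs.hasSum.prod_fiberwise hrow

theorem hasSum_H₂_div_sq : HasSum (fun n : ℕ => H₂ n / n ^ 2) (7 * π ^ 4 / 360) := by
  obtain ⟨c, hc⟩ : Summable fun n : ℕ => H₂ n / n ^ 2 :=
    (hasSum_zeta_two.mul_left (π ^ 2 / 6)).summable.of_nonneg_of_le
      (fun n => div_nonneg (H₂_nonneg n) (by positivity))
      fun n => by rw [mul_one_div]; gcongr; exact H₂_le n
  have hT := hasSum_swap_triangle (f := fun m k => 1 / (m : ℝ) ^ 2 / (k : ℝ) ^ 2)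
    (fun _ _ _ => by positivity)
    ((hc.sub hasSum_zeta_four).congr_fun fun k => by rw [← sum_div, sum_range_inv_sq]; ring)
    fun m => ((hasSum_inv_add_sq m).mul_left (1 / (m : ℝ) ^ 2)).congr_fun fun i => by
      push_cast; ring
  have hT' := ((hasSum_zeta_two.mul_right (π ^ 2 / 6)).sub hc).congr_fun fun m : ℕ =>
    show 1 / (m : ℝ) ^ 2 * (π ^ 2 / 6 - H₂ m) = _ by ring
  have hc' : c = 7 * π ^ 4 / 360 := by linear_combination (hT.unique hT') / 2
  exact hc' ▸ hc

theorem summable_H_sq_div_sq : Summable fun n : ℕ => H n ^ 2 / n ^ 2 := by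
  refine ((summable_nat_rpow_inv.mpr (by norm_num : (1 : ℝ) < 3 / 2)).mul_left 25).of_nonneg_of_le
    (fun n => by positivity) fun n => ?_
  rcases eq_or_ne n 0 with rfl | hn
  · simp
  have hn1 : (1 : ℝ) ≤ n := by exact_mod_cast Nat.one_le_iff_ne_zero.mpr hn
  have hH : H n ≤ 5 * (n : ℝ) ^ (1 / 4 : ℝ) := by
    have hlog := log_le_rpow_div (Nat.cast_nonneg n) (by norm_num : (0 : ℝ) < 1 / 4)
    have hharm := harmonic_le_one_add_log n
    have hone := one_le_rpow hn1 (by norm_num : (0 : ℝ) ≤ 1 / 4)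
    rw [← H_eq_harmonic] at hharm
    linarith
  have hsq : ((n : ℝ) ^ (1 / 4 : ℝ)) ^ 2 = (n : ℝ) ^ (1 / 2 : ℝ) := by
    rw [← rpow_natCast, ← rpow_mul (Nat.cast_nonneg n)]
    norm_num
  have hsplit : (n : ℝ) ^ 2 = (n : ℝ) ^ (1 / 2 : ℝ) * (n : ℝ) ^ (3 / 2 : ℝ) := by
    rw [← rpow_add (by positivity)]
    norm_num
  calc H n ^ 2 / n ^ 2 ≤ (5 * (n : ℝ) ^ (1 / 4 : ℝ)) ^ 2 / n ^ 2 := by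
        gcongr
        exact H_nonneg n
    _ = 25 * ((n : ℝ) ^ (3 / 2 : ℝ))⁻¹ := by
        rw [mul_pow, hsq, hsplit]
        field_simp
        norm_num

theorem hasSum_H_div_mul_tail_via_convolution {a : ℝ}
    (hA : HasSum (fun n : ℕ => H n ^ 2 / n ^ 2) a) :
    HasSum (fun m : ℕ => H m / m * (π ^ 2 / 6 - H₂ m)) (7 * π ^ 4 / 360) := by
  have hT := hasSum_swap_triangle (f := fun m k => H m / (((k : ℝ) - m) * k ^ 2))
    (b := fun m => H m / m * (H m / m - (π ^ 2 / 6 - H₂ m)))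
    (fun m k hmk => div_nonneg (H_nonneg m)
      (mul_nonneg (sub_nonneg.mpr (by exact_mod_cast hmk.le)) (sq_nonneg _)))
    ((hA.sub hasSum_H₂_div_sq).congr_fun fun k => by
      simp_rw [← div_div]
      rw [← sum_div, sum_range_H_div_sub, sub_div])
    fun m => ?_
  · have h := (hA.sub hT).congr_fun fun m => show H m / m * (π ^ 2 / 6 - H₂ m)
        = H m ^ 2 / m ^ 2 - H m / m * (H m / m - (π ^ 2 / 6 - H₂ m)) by ring
    rwa [sub_sub_cancel] at h
  rcases eq_or_ne m 0 with rfl | hm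
  · simp [hasSum_zero]
  have hm' : (m : ℝ) ≠ 0 := by exact_mod_cast hm
  refine (((hasSum_inv_mul_inv_add hm).sub (hasSum_inv_add_sq m)).mul_left (H m / m)).congr_fun
    fun i => ?_
  have hi : (i : ℝ) + 1 ≠ 0 := by positivity
  have hi' : (i : ℝ) + m + 1 ≠ 0 := by positivity
  push_cast
  rw [show (i : ℝ) + (m + 1) - m = i + 1 by ring, ← add_assoc]
  field_simp
  ring

theorem hasSum_H_div_mul_tail_via_partial_sums {a : ℝ}
    (hA : HasSum (fun n : ℕ => H n ^ 2 / n ^ 2) a) :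
    HasSum (fun m : ℕ => H m / m * (π ^ 2 / 6 - H₂ m)) ((a + 7 * π ^ 4 / 360) / 2 - π ^ 4 / 72) :=
  hasSum_swap_triangle (f := fun m k => H m / m / (k : ℝ) ^ 2)
    (fun m _ _ => div_nonneg (div_nonneg (H_nonneg m) m.cast_nonneg) (sq_nonneg _))
    ((((hA.add hasSum_H₂_div_sq).div_const 2).sub hasSum_H_div_pow_three).congr_fun fun k => by
      rw [← sum_div, sum_range_H_div]
      ring)
    fun m => ((hasSum_inv_add_sq m).mul_left (H m / m)).congr_fun fun i => by
      push_cast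
      ring

theorem hasSum_H_sq_div_sq : HasSum (fun n : ℕ => H n ^ 2 / n ^ 2) (17 * π ^ 4 / 360) := by
  obtain ⟨a, hA⟩ := summable_H_sq_div_sq
  have h := (hasSum_H_div_mul_tail_via_convolution hA).unique
    (hasSum_H_div_mul_tail_via_partial_sums hA)
  have ha : a = 17 * π ^ 4 / 360 := by linear_combination -2 * h
  exact ha ▸ hA

end EulerSum

theorem stmt_13 :
    HasSum (fun n : ℕ =>
        (∑ k ∈ Finset.Icc 1 (n + 1), (1 : ℝ) / k) ^ 2 / ((n + 1 : ℝ) ^ 2))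
      (17 * π ^ 4 / 360) := by
  have h := (hasSum_nat_add_iff' 1).mpr EulerSum.hasSum_H_sq_div_sq
  simpa [EulerSum.H] using h
end

section
/- The series ∑_{n=1}^∞ H_n^{(2)}/n² converges and equals 7π⁴/360, where H_n^{(2)} = ∑_{k=1}^n 1/k². -/
/-!
With `a n = 1 / (n + 1) ^ 2`, the series is `∑ₙ ∑_{k ≤ n} a k a n`, the sum of `a i a j` over the
lower triangle `j ≤ i`. By symmetry, twice the triangle is the full square `(∑ a)^2 = ζ(2)^2` plus
the diagonal `∑ a^2 = ζ(4)`, so the sum is `(π⁴/36 + π⁴/90) / 2 = 7π⁴/360`. Nonnegativity makes the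
double series absolutely summable, which justifies the rearrangements.
-/

open Finset Real

section TriangularSum

variable {a : ℕ → ℝ} {s t : ℝ}

lemma hasSum_indicator_diagonal_mul (ht : HasSum (fun n => a n ^ 2) t) :
    HasSum ((Set.range fun n : ℕ => (n, n)).indicator fun p => a p.1 * a p.2) t := by
  have hinj : Function.Injective fun n : ℕ => (n, n) := fun m n h => congrArg Prod.fst h
  refine (hinj.hasSum_iff fun p hp => Set.indicator_of_notMem hp _).1 ?_
  simpa [Function.comp_def, sq] using ht

lemma hasSum_indicator_le_mul_fiber (n : ℕ) :
    HasSum (fun k => {p : ℕ × ℕ | p.2 ≤ p.1}.indicator (fun p => a p.1 * a p.2) (n, k))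
      ((∑ k ∈ range (n + 1), a k) * a n) := by
  rw [sum_mul]
  convert hasSum_sum_of_ne_finset_zero (L := .unconditional ℕ) (s := range (n + 1))
    fun k hk => ?_ using 1
  · refine sum_congr rfl fun k hk => ?_
    rw [Set.indicator_of_mem (by simpa [Nat.lt_succ_iff] using hk), mul_comm]
  · exact Set.indicator_of_notMem (by simpa [Nat.lt_succ_iff] using hk) _

theorem hasSum_sum_range_mul_of_nonneg (ha : ∀ n, 0 ≤ a n) (hs : HasSum a s)
    (ht : HasSum (fun n => a n ^ 2) t) :
    HasSum (fun n => (∑ k ∈ range (n + 1), a k) * a n) ((s ^ 2 + t) / 2) := by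
  set F : ℕ × ℕ → ℝ := fun p => a p.1 * a p.2
  set L : Set (ℕ × ℕ) := {p | p.2 ≤ p.1}
  set Δ : Set (ℕ × ℕ) := Set.range fun n => (n, n)
  have hF : HasSum F (s ^ 2) := sq s ▸ hs.mul hs (hs.summable.mul_of_nonneg hs.summable ha ha)
  have hsymm : F + Δ.indicator F = L.indicator F + L.indicator F ∘ Prod.swap := by
    ext ⟨i, j⟩
    rcases lt_trichotomy i j with h | rfl | h
    · simp [F, L, Δ, Set.indicator, h.ne, h.not_ge, h.le, mul_comm]
    · simp [F, L, Δ, Set.indicator]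
    · simp [F, L, Δ, Set.indicator, h.ne', h.not_ge, h.le]
  obtain ⟨S, hS⟩ := hF.summable.indicator L
  have hS2 : s ^ 2 + t = S + S := by
    have hS' : HasSum (F + Δ.indicator F) (S + S) := by
      rw [hsymm]
      exact hS.add ((Equiv.prodComm ℕ ℕ).hasSum_iff.2 hS)
    exact (hF.add (hasSum_indicator_diagonal_mul ht)).unique hS'
  rw [hS2, add_self_div_two]
  exact hS.prod_fiberwise hasSum_indicator_le_mul_fiber

end TriangularSum

lemma hasSum_one_div_nat_add_one_pow {p : ℕ} {z : ℝ}
    (h : HasSum (fun n : ℕ => 1 / (n : ℝ) ^ p) z) (hp : p ≠ 0) :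
    HasSum (fun n : ℕ => 1 / ((n : ℝ) + 1) ^ p) z := by
  simpa [hp] using (hasSum_nat_add_iff' 1).2 h

lemma sum_Icc_one_div_sq (n : ℕ) :
    ∑ k ∈ Icc 1 (n + 1), (1 : ℝ) / (k : ℝ) ^ 2 = ∑ k ∈ range (n + 1), 1 / ((k : ℝ) + 1) ^ 2 := by
  rw [← Ico_add_one_right_eq_Icc, sum_Ico_eq_sum_range]
  simp [add_comm]

theorem stmt_14 :
    HasSum (fun n : ℕ =>
        (∑ k ∈ Finset.Icc 1 (n + 1), (1 : ℝ) / (k : ℝ) ^ 2) / ((n + 1 : ℝ) ^ 2))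
      (7 * π ^ 4 / 360) := by
  have hζ2 := hasSum_one_div_nat_add_one_pow hasSum_zeta_two two_ne_zero
  have hζ4 := hasSum_one_div_nat_add_one_pow hasSum_zeta_four four_ne_zero
  have key := hasSum_sum_range_mul_of_nonneg (fun n => by positivity) hζ2
    (by simpa [div_pow, ← pow_mul] using hζ4)
  convert key using 1
  · ext n
    rw [sum_Icc_one_div_sq, div_eq_mul_one_div]
  · ring
end

section
/- For every x in the open interval (0,1), ζ'(-1, x) − ζ'(-1, 1−x) = (1/(2π)) ∑_{n=1}^∞ sin(2πnx)/n², where ζ'(s, a) denotes the derivative of the Hurwitz zeta function ζ(s,a) with respect to s. -/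
/-!
Since `ζ(s, x) - ζ(s, 1 - x) = 2 ζ_odd(s, x)`, the claim concerns the derivative of the odd
Hurwitz zeta function at `s = -1`. By its functional equation,
`ζ_odd(1 - w, x) = 2 (2π)^(-w) Γ(w) sin(πw/2) S(w, x)` with `S(w, x) = ∑ sin(2πnx) / n^w`.
At `w = 2` the factor `sin(πw/2)` vanishes, so only its derivative `-π/2` contributes, and
`ζ_odd'(-1, x) = S(2, x) / (4π)`.
-/

open Real Topology

theorem HasDerivAt.mul_mul_of_eq_zero {𝕜 : Type*} [NontriviallyNormedField 𝕜]
    {f g h : 𝕜 → 𝕜} {f' g' h' x : 𝕜} (hf : HasDerivAt f f' x) (hg : HasDerivAt g g' x)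
    (hh : HasDerivAt h h' x) (hgx : g x = 0) :
    HasDerivAt (fun y => f y * g y * h y) (f x * g' * h x) x := by
  simpa [hgx] using (hf.fun_mul hg).fun_mul hh

theorem UnitAddCircle.coe_one_sub (x : ℝ) :
    ((1 - x : ℝ) : UnitAddCircle) = -(x : UnitAddCircle) := by
  rw [AddCircle.coe_sub, AddCircle.coe_period, zero_sub]

namespace HurwitzZeta

theorem deriv_hurwitzZeta_sub_deriv_hurwitzZeta_neg (a : UnitAddCircle) {s : ℂ} (hs : s ≠ 1) :
    deriv (hurwitzZeta a) s - deriv (hurwitzZeta (-a)) s = 2 * deriv (hurwitzZetaOdd a) s := by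
  have hodd : hurwitzZetaOdd a = fun s => (hurwitzZeta a s - hurwitzZeta (-a) s) / 2 :=
    funext (hurwitzZetaOdd_eq a)
  rw [hodd, deriv_div_const, deriv_fun_sub (differentiableAt_hurwitzZeta a hs)
    (differentiableAt_hurwitzZeta (-a) hs)]
  ring

theorem hurwitzZetaOdd_one_sub_eventuallyEq (a : UnitAddCircle) {w : ℂ} (hw : 0 < w.re) :
    (fun w => hurwitzZetaOdd a (1 - w)) =ᶠ[𝓝 w]
      fun w => 2 * (2 * π) ^ (-w) * Complex.Gamma w * Complex.sin (π * w / 2) * sinZeta a w := by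
  filter_upwards [(isOpen_lt continuous_const Complex.continuous_re).mem_nhds hw] with w hw
  refine hurwitzZetaOdd_one_sub a fun n hn => ?_
  simp only [hn, Complex.neg_re, Complex.natCast_re, Left.neg_pos_iff] at hw
  linarith [n.cast_nonneg (α := ℝ)]

theorem hasDerivAt_hurwitzZetaOdd_one_sub_two (a : UnitAddCircle) :
    HasDerivAt (fun w => hurwitzZetaOdd a (1 - w)) (-(sinZeta a 2 / (4 * π))) 2 := by
  have hπ : (π : ℂ) ≠ 0 := Complex.ofReal_ne_zero.mpr pi_ne_zero
  have hfactor : DifferentiableAt ℂ (fun w : ℂ => 2 * (2 * π) ^ (-w) * Complex.Gamma w) 2 := by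
    refine .mul ((differentiableAt_neg_iff.mpr differentiableAt_id).const_cpow
      (.inl (mul_ne_zero two_ne_zero hπ)) |>.const_mul 2)
      (Complex.differentiableAt_Gamma 2 fun m hm => ?_)
    have : (2 : ℝ) = -m := by exact_mod_cast congrArg Complex.re hm
    linarith [m.cast_nonneg (α := ℝ)]
  have hsin : HasDerivAt (fun w : ℂ => Complex.sin (π * w / 2))
      (Complex.cos (π * 2 / 2) * (π / 2)) 2 :=
    (Complex.hasDerivAt_sin _).comp 2
      (((hasDerivAt_id 2).const_mul (π : ℂ)).div_const 2 |>.congr_deriv (by simp))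
  have hsin_two : Complex.sin (π * 2 / 2) = 0 := by
    rw [mul_div_cancel_right₀ _ two_ne_zero, ← Complex.ofReal_sin, Real.sin_pi,
      Complex.ofReal_zero]
  have hcos_two : Complex.cos (π * 2 / 2) = -1 := by
    rw [mul_div_cancel_right₀ _ two_ne_zero, ← Complex.ofReal_cos, Real.cos_pi]
    norm_num
  have hpow_two : (2 * π : ℂ) ^ (-2 : ℂ) = ((2 * π : ℂ) ^ 2)⁻¹ := by
    rw [Complex.cpow_neg, show (2 : ℂ) = (2 : ℕ) by norm_num, Complex.cpow_natCast,
      Nat.cast_ofNat]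
  refine (hfactor.hasDerivAt.mul_mul_of_eq_zero hsin (differentiableAt_sinZeta a 2).hasDerivAt
    hsin_two).congr_of_eventuallyEq (hurwitzZetaOdd_one_sub_eventuallyEq a (by norm_num))
    |>.congr_deriv ?_
  rw [hcos_two, hpow_two, Complex.Gamma_ofNat_eq_factorial]
  field_simp
  ring

theorem hasDerivAt_hurwitzZetaOdd_neg_one (a : UnitAddCircle) :
    HasDerivAt (hurwitzZetaOdd a) (sinZeta a 2 / (4 * π)) (-1) := by
  have h := HasDerivAt.comp_const_sub 1 (-1 : ℂ)
    (by norm_num1; exact hasDerivAt_hurwitzZetaOdd_one_sub_two a)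
  simpa only [sub_sub_cancel, neg_neg] using h

theorem sinZeta_two_eq_tsum (x : ℝ) :
    sinZeta x 2 =
      ((∑' n : ℕ, Real.sin (2 * π * (n + 1) * x) / ((n + 1 : ℝ) ^ 2) : ℝ) : ℂ) := by
  have hsum := (hasSum_nat_add_iff' 1).mpr (hasSum_nat_sinZeta x (s := 2) (by norm_num))
  simp only [Finset.range_one, Finset.sum_singleton, Nat.cast_zero, mul_zero, Real.sin_zero,
    Complex.ofReal_zero, zero_div, sub_zero] at hsum
  rw [Complex.ofReal_tsum]
  refine (hsum.congr_fun fun n => ?_).tsum_eq.symm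
  rw [show (2 : ℂ) = (2 : ℕ) by norm_num, Complex.cpow_natCast]
  push_cast
  ring_nf

end HurwitzZeta

open HurwitzZeta in
theorem stmt_19_general (x : ℝ) :
    deriv (fun s : ℂ => HurwitzZeta.hurwitzZeta (x : UnitAddCircle) s) (-1) -
        deriv (fun s : ℂ => HurwitzZeta.hurwitzZeta ((1 - x : ℝ) : UnitAddCircle) s) (-1) =
      ((1 / (2 * π) * ∑' n : ℕ, Real.sin (2 * π * (n + 1) * x) / ((n + 1 : ℝ) ^ 2) : ℝ) : ℂ) := by
  rw [UnitAddCircle.coe_one_sub, deriv_hurwitzZeta_sub_deriv_hurwitzZeta_neg _ (by norm_num),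
    (hasDerivAt_hurwitzZetaOdd_neg_one _).deriv, sinZeta_two_eq_tsum]
  generalize ∑' n : ℕ, Real.sin (2 * π * (n + 1) * x) / ((n + 1 : ℝ) ^ 2) = S
  have hπ : (π : ℂ) ≠ 0 := Complex.ofReal_ne_zero.mpr pi_ne_zero
  push_cast
  field_simp
  ring

theorem stmt_19 (x : ℝ) (hx : x ∈ Set.Ioo (0 : ℝ) 1) :
    deriv (fun s : ℂ => HurwitzZeta.hurwitzZeta (x : UnitAddCircle) s) (-1) -
        deriv (fun s : ℂ => HurwitzZeta.hurwitzZeta ((1 - x : ℝ) : UnitAddCircle) s) (-1) =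
      ((1 / (2 * π) * ∑' n : ℕ, Real.sin (2 * π * (n + 1) * x) / ((n + 1 : ℝ) ^ 2) : ℝ) : ℂ) :=
  stmt_19_general x
end
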